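/- Under the same hypotheses (sup|H| ≤ c < 1, H of class C¹ with bounded gradient, μ>0), the series A[f](x) = Σ_{k≠0} f_k ∇·[ e^{ik·x} sinh(μ|k| H(x))/cosh(μ|k|) · k/|k| ] converges uniformly on T² for every bounded sequence (f_k) and defines a continuous doubly periodic function. -/

import Mathlib

open Complex Real Filter

noncomputable def knorm (k : ℤ × ℤ) : ℝ := Real.sqrt ((k.1 : ℝ)^2 + (k.2 : ℝ)^2)

noncomputable def ek (k : ℤ × ℤ) (x : ℝ × ℝ) : ℂ :=
  Complex.exp (Complex.I * ((k.1 : ℝ) * x.1 + (k.2 : ℝ) * x.2))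

/-- The vector field whose divergence defines the operator `A`:
`W_k(x) = e^{ik·x} sinh(μ|k|H(x))/cosh(μ|k|) · k/|k|`. -/
noncomputable def Afield (μ : ℝ) (H : ℝ × ℝ → ℝ) (k : ℤ × ℤ) (x : ℝ × ℝ) : ℂ × ℂ :=
  (ek k x * ((Real.sinh (μ * knorm k * H x) / Real.cosh (μ * knorm k) *
      ((k.1 : ℝ) / knorm k) : ℝ) : ℂ),
   ek k x * ((Real.sinh (μ * knorm k * H x) / Real.cosh (μ * knorm k) *
      ((k.2 : ℝ) / knorm k) : ℝ) : ℂ))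

noncomputable def Adiv (μ : ℝ) (H : ℝ × ℝ → ℝ) (k : ℤ × ℤ) (x : ℝ × ℝ) : ℂ :=
  deriv (fun t => (Afield μ H k (t, x.2)).1) x.1 +
  deriv (fun t => (Afield μ H k (x.1, t)).2) x.2

/-!
The divergence of the `k`-th field is computed explicitly; its `∂₂`-term is the `∂₁`-term of
the swapped data `(H ∘ Prod.swap, k.swap)`, so only `∂₁` has to be differentiated. With
`n = |k|`, the bounds `|sinh (μ n H)| ≤ cosh (μ n c)`, `cosh (μ n H) ≤ cosh (μ n c)` and
`|∂ᵢ H| ≤ d` give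
`‖∇·W_k‖ ≤ 2 (1 + μ d) n cosh (μ n c) / cosh (μ n) ≤ 4 (1 + μ d) n e^{-μ (1 - c) n}`,
which is summable over `ℤ²` because `c < 1`. The Weierstrass M-test then yields uniform
convergence and continuity of the sum, and periodicity holds termwise.
-/

lemma knorm_swap (k : ℤ × ℤ) : knorm k.swap = knorm k := by
  simp [knorm, add_comm]

lemma abs_fst_le_knorm (k : ℤ × ℤ) : |(k.1 : ℝ)| ≤ knorm k := by
  rw [knorm, ← Real.sqrt_sq_eq_abs]
  exact Real.sqrt_le_sqrt (le_add_of_nonneg_right (sq_nonneg _))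

lemma abs_snd_le_knorm (k : ℤ × ℤ) : |(k.2 : ℝ)| ≤ knorm k := by
  simpa [knorm_swap] using abs_fst_le_knorm k.swap

lemma norm_ek (k : ℤ × ℤ) (x : ℝ × ℝ) : ‖ek k x‖ = 1 := by
  simp [ek, Complex.norm_exp]

lemma ek_swap (k : ℤ × ℤ) (x : ℝ × ℝ) : ek k.swap x.swap = ek k x := by
  simp [ek, add_comm]

lemma ek_add_two_pi_mul (k : ℤ × ℤ) (m n : ℤ) (x : ℝ × ℝ) :
    ek k (x + (2 * π * m, 2 * π * n)) = ek k x := by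
  have h : I * ((k.1 : ℝ) * ((x.1 + 2 * π * m : ℝ) : ℂ) + (k.2 : ℝ) * ((x.2 + 2 * π * n : ℝ) : ℂ))
      = I * ((k.1 : ℝ) * (x.1 : ℂ) + (k.2 : ℝ) * (x.2 : ℂ))
        + (k.1 * m + k.2 * n : ℤ) * (2 * π * I) := by
    push_cast
    ring
  simp only [ek, Prod.fst_add, Prod.snd_add]
  rw [h, Complex.exp_add, Complex.exp_int_mul_two_pi_mul_I, mul_one]

lemma continuous_ek (k : ℤ × ℤ) : Continuous (ek k) := by
  unfold ek; fun_prop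

lemma hasDerivAt_ek_fst (k : ℤ × ℤ) (x : ℝ × ℝ) :
    HasDerivAt (fun t => ek k (t, x.2)) (I * k.1 * ek k x) x.1 := by
  refine (((((hasDerivAt_id' x.1).ofReal_comp).const_mul ((k.1 : ℝ) : ℂ)).add_const
    (((k.2 : ℝ) : ℂ) * x.2)).const_mul I).cexp.congr_deriv ?_
  simp only [ek]
  push_cast
  ring

lemma Real.abs_sinh_le_cosh_of_abs_le {x b : ℝ} (h : |x| ≤ b) : |sinh x| ≤ cosh b := by
  rw [Real.abs_sinh]
  exact (Real.sinh_lt_cosh _).le.trans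
    (Real.cosh_le_cosh.2 (by simpa using h.trans (le_abs_self b)))

lemma Real.cosh_le_cosh_of_abs_le {x b : ℝ} (h : |x| ≤ b) : cosh x ≤ cosh b :=
  Real.cosh_le_cosh.2 (h.trans (le_abs_self b))

lemma hasDerivAt_partial_fst {E : Type*} [NormedAddCommGroup E] [NormedSpace ℝ E]
    {F : ℝ × ℝ → E} {x : ℝ × ℝ} (hF : DifferentiableAt ℝ F x) :
    HasDerivAt (fun t => F (t, x.2)) (fderiv ℝ F x (1, 0)) x.1 :=
  hF.hasFDerivAt.comp_hasDerivAt_of_eq x.1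
    ((hasDerivAt_id' x.1).prodMk (hasDerivAt_const x.1 x.2)) rfl

lemma ContDiff.continuous_deriv_partial_fst {E : Type*} [NormedAddCommGroup E]
    [NormedSpace ℝ E] {F : ℝ × ℝ → E} (hF : ContDiff ℝ 1 F) :
    Continuous fun x : ℝ × ℝ => deriv (fun t => F (t, x.2)) x.1 := by
  have hd := hF.differentiable one_ne_zero
  simp only [fun x : ℝ × ℝ => (hasDerivAt_partial_fst (hd x)).deriv]
  exact (hF.continuous_fderiv one_ne_zero).clm_apply continuous_const

noncomputable def AdivFst (μ : ℝ) (H : ℝ × ℝ → ℝ) (k : ℤ × ℤ) (x : ℝ × ℝ) : ℂ :=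
  deriv (fun t => (Afield μ H k (t, x.2)).1) x.1

lemma fst_Afield_swap (μ : ℝ) (H : ℝ × ℝ → ℝ) (k : ℤ × ℤ) (x : ℝ × ℝ) :
    (Afield μ (H ∘ Prod.swap) k.swap x.swap).1 = (Afield μ H k x).2 := by
  simp [Afield, ek_swap, knorm_swap]

lemma Adiv_eq_AdivFst_add (μ : ℝ) (H : ℝ × ℝ → ℝ) (k : ℤ × ℤ) (x : ℝ × ℝ) :
    Adiv μ H k x = AdivFst μ H k x + AdivFst μ (H ∘ Prod.swap) k.swap x.swap := by
  simp only [Adiv, AdivFst, ← fst_Afield_swap μ H k]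
  rfl

lemma AdivFst_eq {μ : ℝ} {H : ℝ × ℝ → ℝ} (k : ℤ × ℤ) {x : ℝ × ℝ}
    (hH : DifferentiableAt ℝ H x) :
    AdivFst μ H k x = ek k x * ((k.1 / knorm k : ℝ) : ℂ) *
      (I * k.1 * ((Real.sinh (μ * knorm k * H x) / Real.cosh (μ * knorm k) : ℝ) : ℂ) +
        ((μ * knorm k * Real.cosh (μ * knorm k * H x) * deriv (fun t => H (t, x.2)) x.1 /
          Real.cosh (μ * knorm k) : ℝ) : ℂ)) := by
  have hHt : HasDerivAt (fun t => H (t, x.2)) (deriv (fun t => H (t, x.2)) x.1) x.1 :=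
    (hasDerivAt_partial_fst hH).differentiableAt.hasDerivAt
  have hprofile := (((hHt.const_mul (μ * knorm k)).sinh.div_const
    (Real.cosh (μ * knorm k))).mul_const (k.1 / knorm k : ℝ)).ofReal_comp
  have hA : HasDerivAt (fun t => (Afield μ H k (t, x.2)).1) _ x.1 :=
    (hasDerivAt_ek_fst k x).mul hprofile
  rw [AdivFst, hA.deriv]
  push_cast
  ring

lemma norm_AdivFst_le {μ c d : ℝ} {H : ℝ × ℝ → ℝ} (k : ℤ × ℤ) {x : ℝ × ℝ}
    (hH : DifferentiableAt ℝ H x) (hμ : 0 ≤ μ) (hHc : |H x| ≤ c)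
    (hHx : |deriv (fun t => H (t, x.2)) x.1| ≤ d) :
    ‖AdivFst μ H k x‖ ≤
      (1 + μ * d) * (knorm k * (Real.cosh (μ * knorm k * c) / Real.cosh (μ * knorm k))) := by
  set n := knorm k
  set R := Real.cosh (μ * n * c) / Real.cosh (μ * n)
  set P := Real.sinh (μ * n * H x) / Real.cosh (μ * n)
  set Q :=
    μ * n * Real.cosh (μ * n * H x) * deriv (fun t => H (t, x.2)) x.1 / Real.cosh (μ * n)
  have hn : 0 ≤ n := Real.sqrt_nonneg _
  have hμn : 0 ≤ μ * n := mul_nonneg hμ hn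
  have harg : |μ * n * H x| ≤ μ * n * c := by
    rw [abs_mul, abs_of_nonneg hμn]
    exact mul_le_mul_of_nonneg_left hHc hμn
  have hP : |P| ≤ R := by
    rw [abs_div, abs_of_pos (Real.cosh_pos _)]
    exact div_le_div_of_nonneg_right (Real.abs_sinh_le_cosh_of_abs_le harg) (Real.cosh_pos _).le
  have hQ : |Q| ≤ μ * n * d * R := by
    rw [abs_div, abs_mul, abs_mul, abs_of_nonneg hμn, abs_of_pos (Real.cosh_pos _),
      abs_of_pos (Real.cosh_pos _)]
    calc μ * n * Real.cosh (μ * n * H x) * |deriv (fun t => H (t, x.2)) x.1|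
          / Real.cosh (μ * n)
        ≤ μ * n * Real.cosh (μ * n * c) * d / Real.cosh (μ * n) := by
          gcongr
          exact Real.cosh_le_cosh_of_abs_le harg
      _ = μ * n * d * R := by ring
  have hdir : |(k.1 : ℝ) / n| ≤ 1 := by
    rw [abs_div, abs_of_nonneg hn]
    exact div_le_one_of_le₀ (abs_fst_le_knorm k) hn
  have hsum : ‖I * k.1 * (P : ℂ) + (Q : ℂ)‖ ≤ |(k.1 : ℝ)| * |P| + |Q| :=
    (norm_add_le _ _).trans_eq (by simp)
  rw [AdivFst_eq k hH, norm_mul, norm_mul, norm_ek, one_mul, Complex.norm_real, Real.norm_eq_abs]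
  calc |(k.1 : ℝ) / n| * ‖I * k.1 * (P : ℂ) + (Q : ℂ)‖ ≤ 1 * (|(k.1 : ℝ)| * |P| + |Q|) :=
        mul_le_mul hdir hsum (norm_nonneg _) zero_le_one
    _ ≤ 1 * (n * R + μ * n * d * R) := by
        gcongr
        exact abs_fst_le_knorm k
    _ = (1 + μ * d) * (n * R) := by ring

lemma norm_Adiv_le {μ c d : ℝ} {H : ℝ × ℝ → ℝ} (k : ℤ × ℤ) {x : ℝ × ℝ}
    (hH : DifferentiableAt ℝ H x) (hμ : 0 ≤ μ) (hHc : |H x| ≤ c)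
    (hHx : |deriv (fun t => H (t, x.2)) x.1| ≤ d)
    (hHy : |deriv (fun t => H (x.1, t)) x.2| ≤ d) :
    ‖Adiv μ H k x‖ ≤
      2 * (1 + μ * d) * (knorm k * (Real.cosh (μ * knorm k * c) / Real.cosh (μ * knorm k))) := by
  have hfst := norm_AdivFst_le k hH hμ hHc hHx
  have hsnd := norm_AdivFst_le (μ := μ) (H := H ∘ Prod.swap) k.swap (x := x.swap)
    (hH.comp x.swap (differentiableAt_snd.prodMk differentiableAt_fst)) hμ hHc hHy
  rw [knorm_swap] at hsnd
  rw [Adiv_eq_AdivFst_add]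
  linarith [norm_add_le (AdivFst μ H k x) (AdivFst μ (H ∘ Prod.swap) k.swap x.swap)]

lemma continuous_AdivFst {H : ℝ × ℝ → ℝ} (hH : ContDiff ℝ 1 H) (μ : ℝ) (k : ℤ × ℤ) :
    Continuous (AdivFst μ H k) := by
  have hd := hH.differentiable one_ne_zero
  have := hH.continuous
  have := hH.continuous_deriv_partial_fst
  have := continuous_ek k
  refine Continuous.congr ?_ fun x => (AdivFst_eq k (hd x)).symm
  fun_prop

lemma continuous_Adiv {H : ℝ × ℝ → ℝ} (hH : ContDiff ℝ 1 H) (μ : ℝ) (k : ℤ × ℤ) :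
    Continuous (Adiv μ H k) := by
  simp only [funext (Adiv_eq_AdivFst_add μ H k)]
  exact (continuous_AdivFst hH μ k).add
    ((continuous_AdivFst (hH.comp (contDiff_snd.prodMk contDiff_fst)) μ k.swap).comp
      continuous_swap)

lemma Afield_add_two_pi_mul {μ : ℝ} {H : ℝ × ℝ → ℝ} (k : ℤ × ℤ) {m n : ℤ}
    (hH : ∀ y, H (y + (2 * π * m, 2 * π * n)) = H y) (x : ℝ × ℝ) :
    Afield μ H k (x + (2 * π * m, 2 * π * n)) = Afield μ H k x := by
  simp only [Afield, hH, ek_add_two_pi_mul]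

lemma AdivFst_add_two_pi_mul {μ : ℝ} {H : ℝ × ℝ → ℝ} (k : ℤ × ℤ) {m n : ℤ}
    (hH : ∀ y, H (y + (2 * π * m, 2 * π * n)) = H y) (x : ℝ × ℝ) :
    AdivFst μ H k (x + (2 * π * m, 2 * π * n)) = AdivFst μ H k x := by
  simp only [AdivFst, Prod.fst_add, Prod.snd_add]
  rw [← deriv_comp_add_const]
  congr 1
  funext t
  exact congrArg Prod.fst (Afield_add_two_pi_mul k hH (t, x.2))

lemma Adiv_add_two_pi_mul {μ : ℝ} {H : ℝ × ℝ → ℝ} (k : ℤ × ℤ) {m n : ℤ}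
    (hH : ∀ y, H (y + (2 * π * m, 2 * π * n)) = H y) (x : ℝ × ℝ) :
    Adiv μ H k (x + (2 * π * m, 2 * π * n)) = Adiv μ H k x := by
  rw [Adiv_eq_AdivFst_add, Adiv_eq_AdivFst_add, AdivFst_add_two_pi_mul k hH]
  congr 1
  exact AdivFst_add_two_pi_mul (m := n) (n := m) k.swap (fun y => hH y.swap) x.swap

lemma Real.cosh_mul_div_cosh_le {a c : ℝ} (ha : 0 ≤ a) (hc : 0 ≤ c) :
    Real.cosh (a * c) / Real.cosh a ≤ 2 * Real.exp (-(a * (1 - c))) := by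
  rw [div_le_iff₀ (Real.cosh_pos a)]
  have hac : 0 ≤ a * c := mul_nonneg ha hc
  calc Real.cosh (a * c) ≤ Real.exp (a * c) := by
        rw [Real.cosh_eq]
        linarith [Real.exp_le_exp.2 (show -(a * c) ≤ a * c by linarith)]
    _ = 2 * Real.exp (-(a * (1 - c))) * (Real.exp a / 2) := by
        rw [show a * c = -(a * (1 - c)) + a by ring, Real.exp_add]
        ring
    _ ≤ 2 * Real.exp (-(a * (1 - c))) * Real.cosh a := by
        rw [Real.cosh_eq]
        gcongr
        linarith [Real.exp_pos (-a)]

lemma Real.mul_exp_neg_mul_le {ε : ℝ} (hε : 0 < ε) (t : ℝ) :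
    t * Real.exp (-(ε * t)) ≤ 2 / ε * Real.exp (-(ε / 2 * t)) := by
  have hexp : ε / 2 * t ≤ Real.exp (ε / 2 * t) := by linarith [Real.add_one_le_exp (ε / 2 * t)]
  calc t * Real.exp (-(ε * t)) = 2 / ε * (ε / 2 * t) * Real.exp (-(ε * t)) := by
        field_simp
    _ ≤ 2 / ε * Real.exp (ε / 2 * t) * Real.exp (-(ε * t)) := by gcongr
    _ = 2 / ε * Real.exp (-(ε / 2 * t)) := by
        rw [mul_assoc, ← Real.exp_add]
        ring_nf

lemma summable_exp_neg_mul_abs_int {δ : ℝ} (hδ : 0 < δ) :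
    Summable fun m : ℤ => Real.exp (-(δ * |(m : ℝ)|)) := by
  have hnat : Summable fun n : ℕ => Real.exp (-(δ * n)) := by
    simpa [mul_comm] using Real.summable_exp_nat_mul_iff.2 (neg_neg_of_pos hδ)
  exact .of_nat_of_neg (by simpa using hnat) (by simpa using hnat)

lemma summable_exp_neg_mul_knorm {δ : ℝ} (hδ : 0 < δ) :
    Summable fun k : ℤ × ℤ => Real.exp (-(δ * knorm k)) := by
  have hprod := (summable_exp_neg_mul_abs_int (half_pos hδ)).mul_of_nonneg
    (summable_exp_neg_mul_abs_int (half_pos hδ)) (fun _ => (Real.exp_pos _).le)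
    (fun _ => (Real.exp_pos _).le)
  refine hprod.of_nonneg_of_le (fun _ => (Real.exp_pos _).le) fun k => ?_
  rw [← Real.exp_add, Real.exp_le_exp]
  nlinarith [abs_fst_le_knorm k, abs_snd_le_knorm k]

lemma summable_knorm_mul_cosh_div_cosh {μ c : ℝ} (hμ : 0 < μ) (hc0 : 0 ≤ c) (hc : c < 1) :
    Summable fun k : ℤ × ℤ =>
      knorm k * (Real.cosh (μ * knorm k * c) / Real.cosh (μ * knorm k)) := by
  set ε := μ * (1 - c)
  have hε : 0 < ε := mul_pos hμ (sub_pos.2 hc)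
  refine ((summable_exp_neg_mul_knorm (half_pos hε)).mul_left (4 / ε)).of_nonneg_of_le
    (fun k => mul_nonneg (Real.sqrt_nonneg _) (by positivity)) fun k => ?_
  have hn : 0 ≤ knorm k := Real.sqrt_nonneg _
  calc knorm k * (Real.cosh (μ * knorm k * c) / Real.cosh (μ * knorm k))
      ≤ knorm k * (2 * Real.exp (-(μ * knorm k * (1 - c)))) :=
        mul_le_mul_of_nonneg_left (Real.cosh_mul_div_cosh_le (by positivity) hc0) hn
    _ = 2 * (knorm k * Real.exp (-(ε * knorm k))) := by
        simp only [ε]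
        ring_nf
    _ ≤ 2 * (2 / ε * Real.exp (-(ε / 2 * knorm k))) :=
        mul_le_mul_of_nonneg_left (Real.mul_exp_neg_mul_le hε _) two_pos.le
    _ = 4 / ε * Real.exp (-(ε / 2 * knorm k)) := by ring

/-- under the same hypotheses as for `B`, the series
`A[f](x) = Σ_{k≠0} f_k ∇·[e^{ik·x} sinh(μ|k|H(x))/cosh(μ|k|) · k/|k|]` converges
uniformly on the torus for every bounded sequence `(f_k)` and defines a continuous
doubly periodic function. -/
theorem stmt8 (μ c d : ℝ) (hμ : 0 < μ) (hc : c < 1)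
    (H : ℝ × ℝ → ℝ) (hH : ContDiff ℝ 1 H)
    (hHper : ∀ x : ℝ × ℝ, H (x.1 + 2 * π, x.2) = H x ∧ H (x.1, x.2 + 2 * π) = H x)
    (hHc : ∀ x, |H x| ≤ c)
    (hHx : ∀ x : ℝ × ℝ, |deriv (fun t => H (t, x.2)) x.1| ≤ d)
    (hHy : ∀ x : ℝ × ℝ, |deriv (fun t => H (x.1, t)) x.2| ≤ d)
    (f : {k : ℤ × ℤ // k ≠ 0} → ℂ) (M : ℝ) (hf : ∀ k, ‖f k‖ ≤ M) :
    ∃ g : ℝ × ℝ → ℂ,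
      TendstoUniformly
        (fun (t : Finset {k : ℤ × ℤ // k ≠ 0}) (x : ℝ × ℝ) =>
          ∑ k ∈ t, f k * Adiv μ H k.1 x) g atTop ∧
      Continuous g ∧
      (∀ x : ℝ × ℝ, g (x.1 + 2 * π, x.2) = g x ∧ g (x.1, x.2 + 2 * π) = g x) := by
  have hc0 : 0 ≤ c := (abs_nonneg _).trans (hHc 0)
  have hHd := hH.differentiable one_ne_zero
  set bound : {k : ℤ × ℤ // k ≠ 0} → ℝ := fun k => M * (2 * (1 + μ * d) *
    (knorm k.1 * (Real.cosh (μ * knorm k.1 * c) / Real.cosh (μ * knorm k.1))))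
  have hbound_summable : Summable bound :=
    (((summable_knorm_mul_cosh_div_cosh hμ hc0 hc).subtype _).mul_left _).mul_left M
  have hle_bound : ∀ k x, ‖f k * Adiv μ H k.1 x‖ ≤ bound k := fun k x =>
    norm_mul_le_of_le (hf k) (norm_Adiv_le k.1 (hHd x) hμ.le (hHc x) (hHx x) (hHy x))
  have hperiodic : ∀ {m n : ℤ}, (∀ y, H (y + (2 * π * m, 2 * π * n)) = H y) → ∀ x,
      ∑' k : {k : ℤ × ℤ // k ≠ 0}, f k * Adiv μ H k.1 (x + (2 * π * m, 2 * π * n)) =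
        ∑' k : {k : ℤ × ℤ // k ≠ 0}, f k * Adiv μ H k.1 x := fun hHmn x =>
    tsum_congr fun k => by rw [Adiv_add_two_pi_mul k.1 hHmn]
  refine ⟨fun x => ∑' k, f k * Adiv μ H k.1 x, tendstoUniformly_tsum hbound_summable hle_bound,
    continuous_tsum (fun k => continuous_const.mul (continuous_Adiv hH μ k.1))
      hbound_summable hle_bound, fun x => ⟨?_, ?_⟩⟩
  · have hH10 : ∀ y, H (y + (2 * π * (1 : ℤ), 2 * π * (0 : ℤ))) = H y := fun y => by
      simpa [Prod.add_def] using (hHper y).1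
    simpa [Prod.add_def] using hperiodic hH10 x
  · have hH01 : ∀ y, H (y + (2 * π * (0 : ℤ), 2 * π * (1 : ℤ))) = H y := fun y => by
      simpa [Prod.add_def] using (hHper y).2
    simpa [Prod.add_def] using hperiodic hH01 x
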